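/- Let (h_ℓ)_{ℓ≥1} be deterministic fields on the grid U such that inf_{ℓ≥1} Σ_{x∈U} d_x^int h_ℓ(x)² > 0, 𝓔_int(h_ℓ) > 0 for every ℓ, and 𝓔_int(h_ℓ) → 0 as ℓ → ∞. Then for every fixed q∈(0,1), under inverted dropout with keep probability q, the relative expected intrinsic distortion diverges: (𝔼[𝓔_int(m_q ⊙ h_ℓ)] − 𝓔_int(h_ℓ)) / 𝓔_int(h_ℓ) → +∞ as ℓ → ∞. -/

import Mathlib

open MeasureTheory Real Filter

noncomputable section
/-- A point of the `H × W` feature grid `U = {1,…,H} × {1,…,W}` (0-indexed model). -/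
abbrev GridPt (H W : ℕ) := Fin H × Fin W

/-- Embedding of the grid into `ℤ × ℤ` with coordinates in `{1,…,H} × {1,…,W}`. -/
def gridZ {H W : ℕ} (x : GridPt H W) : ℤ × ℤ := ((x.1 : ℤ) + 1, (x.2 : ℤ) + 1)

/-- Nearest-neighbor adjacency on `ℤ × ℤ`: `ℓ¹`-distance one. -/
def adjZ (p q : ℤ × ℤ) : Bool := |p.1 - q.1| + |p.2 - q.2| == 1

/-- The Dirichlet Laplacian matrix on the grid `U` with edge weights `c` and zero
(auxiliary Dirichlet) boundary: `(L_U φ)(x) = ∑_{y : {x,y} ∈ E} c_{xy} (φ(x) − φ̄(y))`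
where `φ̄` extends `φ` by zero outside `U`. -/
def dirichletLap (H W : ℕ) (c : ℤ × ℤ → ℤ × ℤ → ℝ) :
    Matrix (GridPt H W) (GridPt H W) ℝ := fun x y =>
  if x = y then
    ((([((1 : ℤ), (0 : ℤ)), (-1, 0), (0, 1), (0, -1)] : List (ℤ × ℤ)).map
      (fun d => c (gridZ x) (gridZ x + d))).sum)
  else if adjZ (gridZ x) (gridZ y) then -c (gridZ x) (gridZ y) else 0
/-- Intrinsic energy `𝓔_int(f) = (1/2) ∑_{{x,y} ∈ E_int} c_{xy} (f(x) − f(y))²`,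
written as `1/4` times the sum over ordered adjacent pairs in `U`. -/
def Eint {H W : ℕ} (c : ℤ × ℤ → ℤ × ℤ → ℝ) (f : GridPt H W → ℝ) : ℝ :=
  (1 / 4) * ∑ x : GridPt H W, ∑ y : GridPt H W,
    if adjZ (gridZ x) (gridZ y) then c (gridZ x) (gridZ y) * (f x - f y) ^ 2 else 0

/-- Intrinsic weighted degree `d_x^int = ∑_{y : {x,y} ∈ E_int} c_{xy}`. -/
def dInt {H W : ℕ} (c : ℤ × ℤ → ℤ × ℤ → ℝ) (x : GridPt H W) : ℝ :=
  ∑ y : GridPt H W, if adjZ (gridZ x) (gridZ y) then c (gridZ x) (gridZ y) else 0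

/-- Interior (intrinsic) graph Laplacian `L_int` on `U`, with no boundary term. -/
def Lint (H W : ℕ) (c : ℤ × ℤ → ℤ × ℤ → ℝ) :
    Matrix (GridPt H W) (GridPt H W) ℝ := fun x y =>
  if x = y then dInt c x
  else if adjZ (gridZ x) (gridZ y) then -c (gridZ x) (gridZ y) else 0
/-- Inverted-dropout mask `m_q(x) = b(x)/q` built from a Boolean keep pattern `ω`. -/
def maskD {ι : Type*} (q : ℝ) (ω : ι → Bool) (x : ι) : ℝ :=
  (if ω x then (1 : ℝ) else 0) / q

/-- The law of i.i.d. `Bernoulli(q)` keep variables indexed by `ι`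
(the canonical product measure, i.e. i.i.d. coordinates). -/
def bernoulliPi (ι : Type*) [Fintype ι] (q : ℝ) (hq : q ≤ 1) :
    MeasureTheory.Measure (ι → Bool) :=
  MeasureTheory.Measure.pi fun _ =>
    (PMF.bernoulli (Real.toNNReal q) (Real.toNNReal_le_one.mpr hq)).toMeasure

/-! Inverted dropout is unbiased at each site, `𝔼 m(x) = 1`, and independent across sites, so
`𝔼 m(x) m(y) = 1` for `x ≠ y`, but `𝔼 m(x)² = 1/q`. Expanding each edge term of the energy
and collecting, by symmetry of `c`, the two endpoint terms into degrees gives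
`𝔼 𝓔_int(m ⊙ h) = 𝓔_int(h) + ((1/q − 1)/2) ∑ₓ d_x^int h(x)²`: the excess is a fixed positive
multiple of the degree-weighted mass, which stays bounded below while `𝓔_int(h_ℓ) → 0`. -/

open ProbabilityTheory Topology

section Bernoulli

variable (q : ℝ) (hq : q ≤ 1)

set_option linter.deprecated false in
abbrev bernoulliBool : Measure Bool :=
  (PMF.bernoulli (Real.toNNReal q) (Real.toNNReal_le_one.mpr hq)).toMeasure

set_option linter.deprecated false in
theorem integral_bernoulliBool (hq0 : 0 ≤ q) (g : Bool → ℝ) :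
    ∫ b, g b ∂bernoulliBool q hq = q * g true + (1 - q) * g false := by
  rw [PMF.integral_eq_sum]
  simp only [Fintype.sum_bool, PMF.bernoulli_apply, cond_true, cond_false, smul_eq_mul,
    ENNReal.coe_toReal, NNReal.coe_sub (Real.toNNReal_le_one.mpr hq), Real.coe_toNNReal _ hq0,
    NNReal.coe_one]

variable {ι : Type*} [Fintype ι]

theorem bernoulliPi_eq_pi : bernoulliPi ι q hq = Measure.pi fun _ => bernoulliBool q hq := rfl

instance : IsProbabilityMeasure (bernoulliPi ι q hq) := by
  rw [bernoulliPi_eq_pi]; infer_instance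

theorem integral_maskD_comp (hq0 : 0 ≤ q) (g : ℝ → ℝ) (x : ι) :
    ∫ ω, g (maskD q ω x) ∂bernoulliPi ι q hq = q * g (1 / q) + (1 - q) * g 0 := by
  have hmarginal := integral_comp_eval (μ := fun _ : ι => bernoulliBool q hq) (i := x)
    (f := fun b => g ((if b then 1 else 0) / q)) .of_discrete
  rw [bernoulliPi_eq_pi]
  exact hmarginal.trans (by rw [integral_bernoulliBool q hq hq0]; simp)

theorem integral_maskD (hq0 : 0 < q) (x : ι) : ∫ ω, maskD q ω x ∂bernoulliPi ι q hq = 1 := by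
  simpa [hq0.ne'] using integral_maskD_comp q hq hq0.le id x

theorem integral_maskD_sq (hq0 : 0 < q) (x : ι) :
    ∫ ω, maskD q ω x ^ 2 ∂bernoulliPi ι q hq = 1 / q := by
  rw [integral_maskD_comp q hq hq0.le (· ^ 2)]
  field_simp
  ring

theorem integral_maskD_mul_maskD (hq0 : 0 < q) {x y : ι} (hxy : x ≠ y) :
    ∫ ω, maskD q ω x * maskD q ω y ∂bernoulliPi ι q hq = 1 := by
  have hindep := (iIndepFun_pi (μ := fun _ : ι => bernoulliBool q hq)
    (X := fun _ b => (if b then (1 : ℝ) else 0) / q) fun _ => .of_discrete).indepFun hxy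
  calc ∫ ω, maskD q ω x * maskD q ω y ∂bernoulliPi ι q hq
      = (∫ ω, maskD q ω x ∂bernoulliPi ι q hq) * ∫ ω, maskD q ω y ∂bernoulliPi ι q hq :=
        hindep.integral_mul_eq_mul_integral .of_discrete .of_discrete
    _ = 1 := by rw [integral_maskD q hq hq0, integral_maskD q hq hq0, one_mul]

theorem integral_maskD_mul_sub_maskD_mul_sq (hq0 : 0 < q) {x y : ι} (hxy : x ≠ y) (a b : ℝ) :
    ∫ ω, (maskD q ω x * a - maskD q ω y * b) ^ 2 ∂bernoulliPi ι q hq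
      = (a - b) ^ 2 + (1 / q - 1) * (a ^ 2 + b ^ 2) := by
  have hexpand : ∀ ω : ι → Bool, (maskD q ω x * a - maskD q ω y * b) ^ 2
      = a ^ 2 * maskD q ω x ^ 2 + b ^ 2 * maskD q ω y ^ 2
        - 2 * a * b * (maskD q ω x * maskD q ω y) := fun ω => by ring
  simp_rw [hexpand]
  rw [integral_sub .of_finite .of_finite, integral_add .of_finite .of_finite, integral_const_mul,
    integral_const_mul, integral_const_mul, integral_maskD_sq q hq hq0,
    integral_maskD_sq q hq hq0, integral_maskD_mul_maskD q hq hq0 hxy]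
  ring

end Bernoulli

section Grid

variable {H W : ℕ} (c : ℤ × ℤ → ℤ × ℤ → ℝ)

theorem adjZ_comm (p r : ℤ × ℤ) : adjZ p r = adjZ r p := by
  simp [adjZ, abs_sub_comm]

theorem ne_of_adjZ_gridZ {x y : GridPt H W} (h : adjZ (gridZ x) (gridZ y)) : x ≠ y := by
  rintro rfl
  simp [adjZ] at h

theorem sum_sum_adjZ_mul_sq_add_sq (hsym : ∀ p r : ℤ × ℤ, c p r = c r p)
    (h : GridPt H W → ℝ) :
    ∑ x : GridPt H W, ∑ y : GridPt H W, (if adjZ (gridZ x) (gridZ y) then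
      c (gridZ x) (gridZ y) * (h x ^ 2 + h y ^ 2) else 0) = 2 * ∑ x, dInt c x * h x ^ 2 := by
  have hleft : ∑ x : GridPt H W, ∑ y : GridPt H W, (if adjZ (gridZ x) (gridZ y) then
      c (gridZ x) (gridZ y) * h x ^ 2 else 0) = ∑ x, dInt c x * h x ^ 2 := by
    simp only [dInt, Finset.sum_mul, ite_zero_mul]
  have hright : ∑ x : GridPt H W, ∑ y : GridPt H W, (if adjZ (gridZ x) (gridZ y) then
      c (gridZ x) (gridZ y) * h y ^ 2 else 0) = ∑ x : GridPt H W, ∑ y : GridPt H W,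
      (if adjZ (gridZ x) (gridZ y) then c (gridZ x) (gridZ y) * h x ^ 2 else 0) := by
    rw [Finset.sum_comm]
    refine Finset.sum_congr rfl fun x _ => Finset.sum_congr rfl fun y _ => ?_
    rw [adjZ_comm, hsym]
  rw [two_mul, ← hleft]
  nth_rewrite 2 [← hright]
  simp only [← Finset.sum_add_distrib]
  refine Finset.sum_congr rfl fun x _ => Finset.sum_congr rfl fun y _ => ?_
  split_ifs <;> ring

theorem integral_Eint_maskD_mul (hsym : ∀ p r : ℤ × ℤ, c p r = c r p) (q : ℝ) (hq0 : 0 < q)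
    (hq : q ≤ 1) (h : GridPt H W → ℝ) :
    ∫ ω, Eint c (fun x => maskD q ω x * h x) ∂bernoulliPi (GridPt H W) q hq
      = Eint c h + (1 / q - 1) / 2 * ∑ x, dInt c x * h x ^ 2 := by
  calc ∫ ω, Eint c (fun x => maskD q ω x * h x) ∂bernoulliPi (GridPt H W) q hq
      = 1 / 4 * ∑ x : GridPt H W, ∑ y : GridPt H W, (if adjZ (gridZ x) (gridZ y) then
          c (gridZ x) (gridZ y) * ((h x - h y) ^ 2 + (1 / q - 1) * (h x ^ 2 + h y ^ 2))
          else 0) := by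
        simp only [Eint]
        rw [integral_const_mul, integral_finsetSum _ fun _ _ => .of_finite]
        refine congrArg _ (Finset.sum_congr rfl fun x _ => ?_)
        rw [integral_finsetSum _ fun _ _ => .of_finite]
        refine Finset.sum_congr rfl fun y _ => ?_
        split_ifs with hadj
        · rw [integral_const_mul,
            integral_maskD_mul_sub_maskD_mul_sq q hq hq0 (ne_of_adjZ_gridZ hadj)]
        · exact integral_zero _ _
    _ = Eint c h + (1 / q - 1) / 4 * ∑ x : GridPt H W, ∑ y : GridPt H W,
          (if adjZ (gridZ x) (gridZ y) then c (gridZ x) (gridZ y) * (h x ^ 2 + h y ^ 2)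
          else 0) := by
        simp only [Eint, Finset.mul_sum, ← Finset.sum_add_distrib]
        refine Finset.sum_congr rfl fun x _ => Finset.sum_congr rfl fun y _ => ?_
        split_ifs <;> ring
    _ = Eint c h + (1 / q - 1) / 2 * ∑ x, dInt c x * h x ^ 2 := by
        rw [sum_sum_adjZ_mul_sq_add_sq c hsym]
        ring

end Grid

theorem tendsto_div_atTop_of_le_of_tendsto_nhdsGT_zero {α : Type*} {l : Filter α}
    {u v : α → ℝ} {a : ℝ} (ha : 0 < a) (hu : ∀ᶠ n in l, a ≤ u n)
    (hv : Tendsto v l (𝓝[>] 0)) : Tendsto (fun n => u n / v n) l atTop := by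
  refine tendsto_atTop_mono' l ?_ ((tendsto_inv_nhdsGT_zero.comp hv).const_mul_atTop ha)
  filter_upwards [hu, hv.eventually self_mem_nhdsWithin] with n hun hvn
  exact div_le_div_of_nonneg_right hun hvn.le

theorem dropout_late_stage_mismatch_general {H W : ℕ}
    (c : ℤ × ℤ → ℤ × ℤ → ℝ)
    (hsym : ∀ p q : ℤ × ℤ, c p q = c q p)
    (q : ℝ) (hq0 : 0 < q) (hq1 : q < 1)
    (hseq : ℕ → GridPt H W → ℝ)
    (hmass : ∃ α : ℝ, 0 < α ∧
      ∀ ℓ : ℕ, α ≤ ∑ x : GridPt H W, dInt c x * (hseq ℓ x) ^ 2)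
    (hEpos : ∀ ℓ : ℕ, 0 < Eint c (hseq ℓ))
    (hEto0 : Tendsto (fun ℓ : ℕ => Eint c (hseq ℓ)) atTop (nhds 0)) :
    Tendsto
      (fun ℓ : ℕ =>
        ((∫ ω, Eint c (fun x => maskD q ω x * hseq ℓ x)
            ∂(bernoulliPi (GridPt H W) q hq1.le)) - Eint c (hseq ℓ)) /
          Eint c (hseq ℓ))
      atTop atTop := by
  obtain ⟨α, hα, hαle⟩ := hmass
  have hk : 0 < (1 / q - 1) / 2 := by
    have := one_lt_one_div hq0 hq1
    linarith
  have hE : Tendsto (fun ℓ => Eint c (hseq ℓ)) atTop (𝓝[>] 0) :=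
    tendsto_nhdsWithin_iff.mpr ⟨hEto0, .of_forall hEpos⟩
  simp_rw [integral_Eint_maskD_mul c hsym q hq0 hq1.le, add_sub_cancel_left]
  exact tendsto_div_atTop_of_le_of_tendsto_nhdsGT_zero (mul_pos hk hα)
    (.of_forall fun ℓ => mul_le_mul_of_nonneg_left (hαle ℓ) hk.le) hE

/-- Late-stage mismatch of inverted dropout under coherence: if the
masses `∑_x d_x^int h_ℓ(x)²` stay bounded away from zero while `𝓔_int(h_ℓ) → 0`
(with `𝓔_int(h_ℓ) > 0` for every `ℓ`), then for any fixed `q ∈ (0,1)` the relative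
expected intrinsic distortion
`(𝔼[𝓔_int(m_q ⊙ h_ℓ)] − 𝓔_int(h_ℓ)) / 𝓔_int(h_ℓ)` diverges to `+∞`. -/
theorem dropout_late_stage_mismatch {H W : ℕ}
    (c : ℤ × ℤ → ℤ × ℤ → ℝ)
    (hsym : ∀ p q : ℤ × ℤ, c p q = c q p)
    (hpos : ∀ p q : ℤ × ℤ, adjZ p q → 0 < c p q)
    (q : ℝ) (hq0 : 0 < q) (hq1 : q < 1)
    (hseq : ℕ → GridPt H W → ℝ)
    (hmass : ∃ α : ℝ, 0 < α ∧
      ∀ ℓ : ℕ, α ≤ ∑ x : GridPt H W, dInt c x * (hseq ℓ x) ^ 2)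
    (hEpos : ∀ ℓ : ℕ, 0 < Eint c (hseq ℓ))
    (hEto0 : Tendsto (fun ℓ : ℕ => Eint c (hseq ℓ)) atTop (nhds 0)) :
    Tendsto
      (fun ℓ : ℕ =>
        ((∫ ω, Eint c (fun x => maskD q ω x * hseq ℓ x)
            ∂(bernoulliPi (GridPt H W) q hq1.le)) - Eint c (hseq ℓ)) /
          Eint c (hseq ℓ))
      atTop atTop :=
  dropout_late_stage_mismatch_general c hsym q hq0 hq1 hseq hmass hEpos hEto0

end
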